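/- arXiv:1603.07500 — 3 statements merged into one kernel-verified Lean document; each statement's English description precedes it below -/
import Mathlib

section
/- Let P be a real 4×4 matrix of rank 3 defining a projection P_ã (so that ker P is one-dimensional and spanned by the projective eye point ã), and let C be a projective rational curve, properly parametrized by x̃(t), having at least one affine point. If C is not a straight line passing through ã, then the image P_ã(C) is a rational curve; equivalently, there do not exist a polynomial λ(t) and a fixed point α ∈ P³_ℂ such that P·x̃(t) = λ(t)·α for all t. -/
/-!
Since `P` has rank 3, its kernel is the line spanned by the eye point `a`, also after
complexification (split a kernel vector into real and imaginary parts). If every image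
`P·X(t)` were a multiple of one point `α`, then either `α = P·b` for some `b`, and
`X(t) - λ(t)·b` lies in the kernel, or no nonzero multiple of `α` is an image, and `X(t)`
itself lies in the kernel. Either way the curve lies in the projective line through `[a]`
and `[b]`, contradicting the hypothesis.
-/

open Matrix

theorem Submodule.exists_comap_span_singleton_le_span_pair {K V W : Type*} [Field K]
    [AddCommGroup V] [Module K V] [AddCommGroup W] [Module K W]
    (f : V →ₗ[K] W) {a : V} (hker : LinearMap.ker f ≤ K ∙ a) (α : W) :
    ∃ b : V, (K ∙ α).comap f ≤ span K {a, b} := by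
  have ha_le (b : V) : K ∙ a ≤ span K {a, b} := span_mono (by simp)
  by_cases hα : α ∈ LinearMap.range f
  · obtain ⟨b, rfl⟩ := hα
    refine ⟨b, fun y hy => ?_⟩
    obtain ⟨c, hc⟩ := mem_span_singleton.mp (mem_comap.mp hy)
    have hyb : y - c • b ∈ LinearMap.ker f := by simp [← hc]
    simpa using add_mem (ha_le b (hker hyb))
      (smul_mem _ c (subset_span (by simp) : b ∈ span K {a, b}))
  · refine ⟨0, fun y hy => ?_⟩
    obtain ⟨c, hc⟩ := mem_span_singleton.mp (mem_comap.mp hy)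
    have hc0 : c = 0 := by
      by_contra hc0
      exact hα ⟨c⁻¹ • y, by simp [← hc, hc0]⟩
    exact ha_le 0 (hker (by simp [← hc, hc0]))

theorem Matrix.ker_mulVecLin_eq_span_singleton {K m n : Type*} [Field K] [Fintype m]
    [Fintype n] (P : Matrix m n K) (hrank : P.rank + 1 = Fintype.card n)
    {a : n → K} (ha : a ≠ 0) (haker : P *ᵥ a = 0) :
    LinearMap.ker P.mulVecLin = K ∙ a := by
  have hfinrank : Module.finrank K (LinearMap.ker P.mulVecLin) = 1 := by
    have := LinearMap.finrank_range_add_finrank_ker P.mulVecLin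
    rw [Module.finrank_fintype_fun_eq_card] at this
    change P.rank + _ = _ at this
    omega
  symm
  exact Submodule.eq_of_le_of_finrank_eq
    ((Submodule.span_singleton_le_iff_mem _ _).mpr haker)
    (by rw [finrank_span_singleton ha, hfinrank])

theorem Matrix.re_map_ofReal_mulVec {m n : Type*} [Fintype n] (P : Matrix m n ℝ)
    (v : n → ℂ) (i : m) :
    ((P.map (algebraMap ℝ ℂ) *ᵥ v) i).re = (P *ᵥ fun j => (v j).re) i := by
  simp [mulVec, dotProduct, Complex.re_sum]

theorem Matrix.im_map_ofReal_mulVec {m n : Type*} [Fintype n] (P : Matrix m n ℝ)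
    (v : n → ℂ) (i : m) :
    ((P.map (algebraMap ℝ ℂ) *ᵥ v) i).im = (P *ᵥ fun j => (v j).im) i := by
  simp [mulVec, dotProduct, Complex.im_sum]

theorem Matrix.ker_mulVecLin_map_ofReal_le {m n : Type*} [Fintype n]
    (P : Matrix m n ℝ) {a : n → ℝ} (hker : LinearMap.ker P.mulVecLin ≤ ℝ ∙ a) :
    LinearMap.ker (P.map (algebraMap ℝ ℂ)).mulVecLin ≤ ℂ ∙ fun i => (a i : ℂ) := by
  intro v hv
  have hv : P.map (algebraMap ℝ ℂ) *ᵥ v = 0 := hv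
  have hre : P *ᵥ (fun j => (v j).re) = 0 := funext fun i => by
    rw [← re_map_ofReal_mulVec, hv]; rfl
  have him : P *ᵥ (fun j => (v j).im) = 0 := funext fun i => by
    rw [← im_map_ofReal_mulVec, hv]; rfl
  obtain ⟨c, hc⟩ := Submodule.mem_span_singleton.mp (hker hre)
  obtain ⟨d, hd⟩ := Submodule.mem_span_singleton.mp (hker him)
  refine Submodule.mem_span_singleton.mpr ⟨c + d * Complex.I, funext fun j => ?_⟩
  have hcj := congrFun hc j
  have hdj := congrFun hd j
  simp only [Pi.smul_apply, smul_eq_mul] at hcj hdj ⊢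
  rw [← Complex.re_add_im (v j), ← hcj, ← hdj]
  push_cast
  ring

theorem statement_0_general
    (P : Matrix (Fin 4) (Fin 4) ℝ) (hrank : P.rank = 3)
    (a : Fin 4 → ℝ) (ha : a ≠ 0) (haker : P.mulVec a = 0)
    (X : Fin 4 → Polynomial ℂ)
    -- the curve is not a straight (projective) line going through the eye point `[a]`
    (hline : ¬ ∃ b : Fin 4 → ℂ, ∀ t : ℂ,
        (fun i => (X i).eval t) ∈ Submodule.span ℂ {(fun i => ((a i : ℂ))), b}) :
    ¬ ∃ (lam : Polynomial ℂ) (α : Fin 4 → ℂ), α ≠ 0 ∧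
      ∀ t : ℂ, (P.map (algebraMap ℝ ℂ)).mulVec (fun i => (X i).eval t) =
        lam.eval t • α := by
  rintro ⟨lam, α, -, hX⟩
  have hker : LinearMap.ker P.mulVecLin = ℝ ∙ a :=
    P.ker_mulVecLin_eq_span_singleton (by simp [hrank]) ha haker
  obtain ⟨b, hb⟩ := Submodule.exists_comap_span_singleton_le_span_pair _
    (P.ker_mulVecLin_map_ofReal_le hker.le) α
  exact hline ⟨b, fun t => hb (Submodule.mem_span_singleton.mpr ⟨lam.eval t, (hX t).symm⟩)⟩

/-- Let `P` be a real 4×4 matrix of rank 3 defining a projection,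
with kernel spanned by the projective eye point `a`, and let `C` be a projective
rational curve, properly parametrized by the homogeneous polynomial parametrization
`X(t) = [X₀(t):X₁(t):X₂(t):X₃(t)]`, having at least one affine point.  If `C` is not a
straight line passing through `[a]`, then the image of `C` under the projection is a
rational curve; equivalently, there do not exist a polynomial `λ(t)` and a fixed point
`α ∈ ℙ³_ℂ` such that `P·X(t) = λ(t)·α` for all `t`. -/
theorem statement_0
    (P : Matrix (Fin 4) (Fin 4) ℝ) (hrank : P.rank = 3)
    (a : Fin 4 → ℝ) (ha : a ≠ 0) (haker : P.mulVec a = 0)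
    (X : Fin 4 → Polynomial ℂ)
    -- the parametrization is proper: injective (as a map to ℙ³_ℂ) for all but
    -- finitely many parameter values
    (hproper : {t : ℂ | (fun i => (X i).eval t) ≠ 0 ∧ ∃ t', t' ≠ t ∧
        (fun i => (X i).eval t') ≠ 0 ∧ ∃ lam : ℂ, lam ≠ 0 ∧
          (fun i => (X i).eval t') = lam • (fun i => (X i).eval t)}.Finite)
    -- the curve has at least one affine point
    (haff : ∃ t : ℂ, (X 3).eval t ≠ 0)
    -- the curve is not a straight (projective) line going through the eye point `[a]`
    (hline : ¬ ∃ b : Fin 4 → ℂ, ∀ t : ℂ,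
        (fun i => (X i).eval t) ∈ Submodule.span ℂ {(fun i => ((a i : ℂ))), b}) :
    ¬ ∃ (lam : Polynomial ℂ) (α : Fin 4 → ℂ), α ≠ 0 ∧
      ∀ t : ℂ, (P.map (algebraMap ℝ ℂ)).mulVec (fun i => (X i).eval t) =
        lam.eval t • α :=
  statement_0_general P hrank a ha haker X hline
end

section
/- Let C2 = P_ã(C1) with ã = [ã1:ã2:ã3:ã4], and let ψ(t) be the rational function associated with P_ã. Then there exists a rational function λ(t) such that for each t, the values s = ψ(t) and λ = λ(t) satisfy the system: x2(s) − x1(t) = λ·(ã4·x1(t) − ã1), y2(s) − y1(t) = λ·(ã4·y1(t) − ã2), z2(s) − z1(t) = λ·(ã4·z1(t) − ã3). -/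
noncomputable section

open Polynomial Filter Matrix

/-- Evaluation of a real rational function at a real point (junk value at poles). -/
def RFeval (f : RatFunc ℝ) (t : ℝ) : ℝ := f.num.eval t / f.denom.eval t

/-- Evaluation of a real rational function at a complex point (junk value at poles). -/
def RFevalC (f : RatFunc ℝ) (t : ℂ) : ℂ :=
  ((f.num.map (algebraMap ℝ ℂ)).eval t) / ((f.denom.map (algebraMap ℝ ℂ)).eval t)

/-- The derivative of a rational function. -/
def RFderiv (f : RatFunc ℝ) : RatFunc ℝ :=
  (algebraMap (Polynomial ℝ) (RatFunc ℝ) (derivative f.num) *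
      algebraMap (Polynomial ℝ) (RatFunc ℝ) f.denom -
    algebraMap (Polynomial ℝ) (RatFunc ℝ) f.num *
      algebraMap (Polynomial ℝ) (RatFunc ℝ) (derivative f.denom)) /
  algebraMap (Polynomial ℝ) (RatFunc ℝ) (f.denom ^ 2)

/-- The real domain of definition of a rational space parametrization. -/
def DomR (x : Fin 3 → RatFunc ℝ) (t : ℝ) : Prop := ∀ i, (x i).denom.eval t ≠ 0

/-- The complex domain of definition of a rational space parametrization. -/
def DomC (x : Fin 3 → RatFunc ℝ) (t : ℂ) : Prop :=
  ∀ i, ((x i).denom.map (algebraMap ℝ ℂ)).eval t ≠ 0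

/-- The affine point of the curve corresponding to the (real) parameter value `t`. -/
def evalAff (x : Fin 3 → RatFunc ℝ) (t : ℝ) : Fin 3 → ℝ := fun i => RFeval (x i) t

/-- The affine point of the curve corresponding to the (complex) parameter value `t`. -/
def evalAffC (x : Fin 3 → RatFunc ℝ) (t : ℂ) : Fin 3 → ℂ := fun i => RFevalC (x i) t

/-- Properness of a parametrization: it is injective for all but finitely many
(complex) parameter values. -/
def ProperParam (x : Fin 3 → RatFunc ℝ) : Prop :=
  {t : ℂ | DomC x t ∧ ∃ t', t' ≠ t ∧ DomC x t' ∧ evalAffC x t' = evalAffC x t}.Finite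

/-- The curve is a straight line. -/
def IsLineParam (x : Fin 3 → RatFunc ℝ) : Prop :=
  ∃ p v : Fin 3 → ℝ, v ≠ 0 ∧ ∀ t : ℝ, DomR x t → ∃ μ : ℝ, evalAff x t = p + μ • v

/-- The curve lies in the plane with coefficient vector `n = (A,B,C,D)`,
of equation `Ax + By + Cz + D = 0`. -/
def InPlane (x : Fin 3 → RatFunc ℝ) (n : Fin 4 → ℝ) : Prop :=
  ∀ t : ℝ, DomR x t → (∑ i : Fin 3, n i.castSucc * RFeval (x i) t) + n 3 = 0

/-- The normal vector of the plane `Ax + By + Cz + D = 0` is nonzero. -/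
def PlaneNormalNZ (n : Fin 4 → ℝ) : Prop := ¬ (n 0 = 0 ∧ n 1 = 0 ∧ n 2 = 0)

/-- Complexification of a real vector. -/
def cmap4 (v : Fin 4 → ℝ) : Fin 4 → ℂ := fun i => (v i : ℂ)

/-- Homogeneous form of the projection onto the plane `n` from the eye point `a`:
`p ↦ ⟨n,p⟩ a − ⟨n,a⟩ p`. -/
def projHC (n a p : Fin 4 → ℂ) : Fin 4 → ℂ :=
  (∑ i, n i * p i) • a - (∑ i, n i * a i) • p

/-- Complex homogeneous coordinates of the affine point `x(t)`. -/
def homC (x : Fin 3 → RatFunc ℝ) (t : ℂ) : Fin 4 → ℂ :=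
  Fin.snoc (evalAffC x t) 1

/-- The affine form of the projection, acting on affine (complex) points. -/
def projAffC (n a : Fin 4 → ℝ) (p : Fin 3 → ℂ) : Fin 3 → ℂ :=
  fun i => projHC (cmap4 n) (cmap4 a) (Fin.snoc p 1) i.castSucc /
    projHC (cmap4 n) (cmap4 a) (Fin.snoc p 1) 3

/-- The parameter values `t`, `s` are related by the projection from the eye point `a`
onto the plane `n`: the projection maps `x1(t)` to `x2(s)`. -/
def RelatedByProj (n a : Fin 4 → ℝ) (x1 x2 : Fin 3 → RatFunc ℝ) (t s : ℂ) : Prop :=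
  DomC x1 t ∧ DomC x2 s ∧
    ∃ lam : ℂ, lam ≠ 0 ∧ projHC (cmap4 n) (cmap4 a) (homC x1 t) = lam • homC x2 s

/-- `C2` (parametrized by `x2`) is the projection of `C1` (parametrized by `x1`)
from the eye point `a` onto the plane `n`: every point of `C2` (up to finitely many)
is the projection of some point of `C1`.  The eye point is a nonzero vector of `ℝ⁴`
(projective coordinates) not lying on the plane. -/
def IsProjectionOf (n a : Fin 4 → ℝ) (x1 x2 : Fin 3 → RatFunc ℝ) : Prop :=
  a ≠ 0 ∧ (∑ i, n i * a i) ≠ 0 ∧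
    ∀ᶠ s : ℂ in cofinite, ∃ t : ℂ, RelatedByProj n a x1 x2 t s

/-- The projection, restricted to `C1`, is injective for almost all points of `C2`. -/
def NonDegenerateProj (n a : Fin 4 → ℝ) (x1 x2 : Fin 3 → RatFunc ℝ) : Prop :=
  ∀ᶠ s : ℂ in cofinite, ∃! t : ℂ, RelatedByProj n a x1 x2 t s

/-- `ψ` is associated with the projection:  `P_ã ∘ x1 = x2 ∘ ψ`. -/
def AssociatedRF (n a : Fin 4 → ℝ) (x1 x2 : Fin 3 → RatFunc ℝ) (ψ : RatFunc ℝ) : Prop :=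
  ∀ᶠ t : ℂ in cofinite, RelatedByProj n a x1 x2 t (RFevalC ψ t)

/-- `N(t,s)·(x1(t) − x2(s)) = det(x1(t) − x2(s), x1'(t), x2'(s))`,
where `N(t,s) = x1'(t) × x2'(s)`, evaluated at the complex pair `(t,s)`. -/
def NdotC (x1 x2 : Fin 3 → RatFunc ℝ) (t s : ℂ) : ℂ :=
  dotProduct
    (crossProduct (fun i => RFevalC (RFderiv (x1 i)) t) (fun i => RFevalC (RFderiv (x2 i)) s))
    (fun i => RFevalC (x1 i) t - RFevalC (x2 i) s)

/-- Evaluation of a bivariate real polynomial at a complex point `(t,s)`. -/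
def aeval2 (t s : ℂ) (F : MvPolynomial (Fin 2) ℝ) : ℂ := MvPolynomial.aeval ![t, s] F

/-- `Ncal` is (a representative of) the square-free part of the numerator of the
bivariate rational function `N(t,s)·(x1(t) − x2(s))`: it is square-free and has the
same zero set. -/
def IsNcal (x1 x2 : Fin 3 → RatFunc ℝ) (Ncal : MvPolynomial (Fin 2) ℝ) : Prop :=
  Squarefree Ncal ∧
    ∀ t s : ℂ, DomC x1 t → DomC x2 s → (aeval2 t s Ncal = 0 ↔ NdotC x1 x2 t s = 0)

/-- The polynomial `G(t,s) = p(t) − s·q(t)` associated with `ψ = p/q`;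
variable `0` is `t` and variable `1` is `s`. -/
def assocPoly (ψ : RatFunc ℝ) : MvPolynomial (Fin 2) ℝ :=
  Polynomial.aeval (MvPolynomial.X 0) ψ.num -
    MvPolynomial.X 1 * Polynomial.aeval (MvPolynomial.X 0) ψ.denom

/-- `(t,s)` is a singular point of the plane curve `𝒩* : Ncal = 0`. -/
def SingPt (Ncal : MvPolynomial (Fin 2) ℝ) (t s : ℂ) : Prop :=
  aeval2 t s Ncal = 0 ∧ aeval2 t s (MvPolynomial.pderiv 0 Ncal) = 0 ∧
    aeval2 t s (MvPolynomial.pderiv 1 Ncal) = 0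

/-- `p` is the limit point `P^∞ = lim_{t→∞} x(t)` of the parametrization `x`. -/
def IsLimitPoint (x : Fin 3 → RatFunc ℝ) (p : Fin 3 → ℂ) : Prop :=
  Filter.Tendsto (evalAffC x) (Filter.cocompact ℂ) (nhds p)

/-- `q` is a self-intersection of the curve parametrized by `x`. -/
def SelfIntersection (x : Fin 3 → RatFunc ℝ) (q : Fin 3 → ℂ) : Prop :=
  ∃ s1 s2 : ℂ, s1 ≠ s2 ∧ DomC x s1 ∧ DomC x s2 ∧ evalAffC x s1 = q ∧ evalAffC x s2 = q

/-- The pair `(x1(t0), x2(s0))` is lucky. -/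
def LuckyPair (x1 x2 : Fin 3 → RatFunc ℝ) (Ncal : MvPolynomial (Fin 2) ℝ)
    (t0 s0 : ℂ) : Prop :=
  evalAffC x1 t0 ≠ evalAffC x2 s0 ∧
  ¬ IsLimitPoint x1 (evalAffC x1 t0) ∧
  ¬ IsLimitPoint x2 (evalAffC x2 s0) ∧
  ¬ SelfIntersection x2 (evalAffC x2 s0) ∧
  ¬ ∃ s' : ℂ, SingPt Ncal t0 s'

/-!
Write `p = (x1(t), 1)` and `S = ⟨n, p⟩`. If the projection `⟨n, p⟩ a − ⟨n, a⟩ p` equals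
`c · (x2(s), 1)` with `c ≠ 0`, the last coordinate gives `c = a₄ S − ⟨n, a⟩`, and the other three
give `x2(s) − x1(t) = λ · (a₄ x1(t) − a)` with `λ = S / (⟨n, a⟩ − a₄ S)`, a rational function of `t`
alone. Since `ψ` is associated with the projection, this holds at `s = ψ(t)` for all but finitely
many complex `t`. At a real `t` where all denominators are nonzero both sides are continuous in
`t ∈ ℂ`, and a cofinite subset of `ℂ` accumulates at `t`, so the identity holds at `t` too.
-/

open Topology

universe u

namespace RatFunc

-- `RatFunc.eval` takes the source and target fields in the same universe.
variable {K L : Type u} [Field K] [Field L] {f : K →+* L} {a : L}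

theorem eval₂_denom_add_ne_zero {x y : RatFunc K} (hx : (denom x).eval₂ f a ≠ 0)
    (hy : (denom y).eval₂ f a ≠ 0) : (denom (x + y)).eval₂ f a ≠ 0 := fun h => by
  have := Polynomial.eval₂_eq_zero_of_dvd_of_eval₂_eq_zero f a (denom_add_dvd x y) h
  exact mul_ne_zero hx hy (by rwa [Polynomial.eval₂_mul] at this)

theorem eval₂_denom_mul_ne_zero {x y : RatFunc K} (hx : (denom x).eval₂ f a ≠ 0)
    (hy : (denom y).eval₂ f a ≠ 0) : (denom (x * y)).eval₂ f a ≠ 0 := fun h => by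
  have := Polynomial.eval₂_eq_zero_of_dvd_of_eval₂_eq_zero f a (denom_mul_dvd x y) h
  exact mul_ne_zero hx hy (by rwa [Polynomial.eval₂_mul] at this)

theorem eval₂_denom_C_ne_zero (c : K) : (denom (C c)).eval₂ f a ≠ 0 := by
  simp [denom_C]

theorem eval₂_denom_C_mul_ne_zero (c : K) {x : RatFunc K} (hx : (denom x).eval₂ f a ≠ 0) :
    (denom (C c * x)).eval₂ f a ≠ 0 :=
  eval₂_denom_mul_ne_zero (eval₂_denom_C_ne_zero c) hx

theorem eval_C_mul (c : K) {x : RatFunc K} (hx : (denom x).eval₂ f a ≠ 0) :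
    RatFunc.eval f a (C c * x) = f c * RatFunc.eval f a x := by
  rw [RatFunc.eval_mul f a (eval₂_denom_C_ne_zero c) hx, eval_C]

theorem eval₂_denom_sub_ne_zero {x y : RatFunc K} (hx : (denom x).eval₂ f a ≠ 0)
    (hy : (denom y).eval₂ f a ≠ 0) : (denom (x - y)).eval₂ f a ≠ 0 := by
  rw [sub_eq_add_neg, neg_eq_neg_one_mul, ← map_one C, ← map_neg]
  exact eval₂_denom_add_ne_zero hx (eval₂_denom_C_mul_ne_zero _ hy)

theorem eval_sub {x y : RatFunc K} (hx : (denom x).eval₂ f a ≠ 0)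
    (hy : (denom y).eval₂ f a ≠ 0) :
    RatFunc.eval f a (x - y) = RatFunc.eval f a x - RatFunc.eval f a y := by
  rw [sub_eq_add_neg, neg_eq_neg_one_mul, ← map_one C, ← map_neg,
    RatFunc.eval_add f a hx (eval₂_denom_C_mul_ne_zero _ hy), eval_C_mul _ hy]
  simp [sub_eq_add_neg]

theorem eval₂_denom_sum_ne_zero {ι : Type*} (s : Finset ι) {g : ι → RatFunc K}
    (hg : ∀ i ∈ s, (denom (g i)).eval₂ f a ≠ 0) : (denom (∑ i ∈ s, g i)).eval₂ f a ≠ 0 := by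
  classical
  induction s using Finset.induction_on with
  | empty => simp
  | insert j s hj ih =>
    rw [Finset.sum_insert hj]
    exact eval₂_denom_add_ne_zero (hg j (s.mem_insert_self j))
      (ih fun i hi => hg i (Finset.mem_insert_of_mem hi))

theorem eval_sum {ι : Type*} (s : Finset ι) {g : ι → RatFunc K}
    (hg : ∀ i ∈ s, (denom (g i)).eval₂ f a ≠ 0) :
    RatFunc.eval f a (∑ i ∈ s, g i) = ∑ i ∈ s, RatFunc.eval f a (g i) := by
  classical
  induction s using Finset.induction_on with
  | empty => simp
  | insert j s hj ih =>
    have hs : ∀ i ∈ s, (denom (g i)).eval₂ f a ≠ 0 :=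
      fun i hi => hg i (Finset.mem_insert_of_mem hi)
    rw [Finset.sum_insert hj, Finset.sum_insert hj,
      RatFunc.eval_add f a (hg j (s.mem_insert_self j)) (eval₂_denom_sum_ne_zero s hs), ih hs]

def linearFormAlong {m : ℕ} (n : Fin (m + 1) → K) (x : Fin m → RatFunc K) : RatFunc K :=
  ∑ i, C (n i) * (Fin.snoc x 1 : Fin (m + 1) → RatFunc K) i

variable {m : ℕ} {x : Fin m → RatFunc K}

theorem eval₂_denom_snoc_one_ne_zero (hx : ∀ j, (denom (x j)).eval₂ f a ≠ 0)
    (i : Fin (m + 1)) : (denom ((Fin.snoc x 1 : Fin (m + 1) → RatFunc K) i)).eval₂ f a ≠ 0 := by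
  induction i using Fin.lastCases with
  | last => simp
  | cast j => simpa using hx j

theorem eval_snoc_one (i : Fin (m + 1)) :
    RatFunc.eval f a ((Fin.snoc x 1 : Fin (m + 1) → RatFunc K) i) =
      (Fin.snoc (fun j => RatFunc.eval f a (x j)) 1 : Fin (m + 1) → L) i := by
  induction i using Fin.lastCases with
  | last => simp
  | cast j => simp

theorem eval₂_denom_linearFormAlong_ne_zero (n : Fin (m + 1) → K)
    (hx : ∀ j, (denom (x j)).eval₂ f a ≠ 0) : (denom (linearFormAlong n x)).eval₂ f a ≠ 0 :=
  eval₂_denom_sum_ne_zero _ fun i _ =>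
    eval₂_denom_C_mul_ne_zero _ (eval₂_denom_snoc_one_ne_zero hx i)

theorem eval_linearFormAlong (n : Fin (m + 1) → K) (hx : ∀ j, (denom (x j)).eval₂ f a ≠ 0) :
    RatFunc.eval f a (linearFormAlong n x) =
      ∑ i, f (n i) * (Fin.snoc (fun j => RatFunc.eval f a (x j)) 1 : Fin (m + 1) → L) i := by
  rw [linearFormAlong, eval_sum _ fun i _ =>
    eval₂_denom_C_mul_ne_zero _ (eval₂_denom_snoc_one_ne_zero hx i)]
  simp only [eval_C_mul _ (eval₂_denom_snoc_one_ne_zero hx _), eval_snoc_one]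

end RatFunc

theorem Polynomial.eventually_cofinite_eval₂_ne_zero {K L : Type*} [Field K] [Field L]
    (f : K →+* L) {p : K[X]} (hp : p ≠ 0) : ∀ᶠ x in cofinite, p.eval₂ f x ≠ 0 := by
  have := finite_setOfPred_isRoot ((Polynomial.map_ne_zero_iff f.injective).2 hp)
  simpa [eventually_cofinite, Polynomial.IsRoot, Polynomial.eval_map] using this

theorem ContinuousAt.eq_of_eventually_cofinite {X Y : Type*} [TopologicalSpace X] [T1Space X]
    [TopologicalSpace Y] [T2Space Y] {g : X → Y} {x : X} {y : Y} [(𝓝[≠] x).NeBot]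
    (hg : ContinuousAt g x) (h : ∀ᶠ z in cofinite, g z = y) : g x = y :=
  ((hg.eventuallyEq_nhds_iff_eventuallyEq_nhdsNE continuousAt_const).1
    (h.filter_mono (nhdsNE_le_cofinite x))).eq_of_nhds

theorem Polynomial.eval_map_ofReal (p : ℝ[X]) (t : ℝ) :
    (p.map (algebraMap ℝ ℂ)).eval (t : ℂ) = p.eval t := by
  rw [Polynomial.eval_map, ← Complex.coe_algebraMap, Polynomial.eval₂_at_apply]

theorem RFevalC_ofReal (g : RatFunc ℝ) (t : ℝ) : RFevalC g t = RFeval g t := by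
  rw [RFevalC, RFeval, Polynomial.eval_map_ofReal, Polynomial.eval_map_ofReal, Complex.ofReal_div]

theorem RFevalC_eq_eval (g : RatFunc ℝ) (τ : ℂ) :
    RFevalC g τ = RatFunc.eval (algebraMap ℝ ℂ) τ g := by
  rw [RFevalC, RatFunc.eval, Polynomial.eval_map, Polynomial.eval_map]

theorem evalAffC_eq_eval (x : Fin 3 → RatFunc ℝ) (τ : ℂ) :
    evalAffC x τ = fun j => RatFunc.eval (algebraMap ℝ ℂ) τ (x j) :=
  funext fun j => RFevalC_eq_eval (x j) τ

theorem continuousAt_RFevalC (g : RatFunc ℝ) {τ : ℂ}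
    (h : (g.denom.map (algebraMap ℝ ℂ)).eval τ ≠ 0) : ContinuousAt (RFevalC g) τ :=
  (Polynomial.continuous _).continuousAt.div (Polynomial.continuous _).continuousAt h

theorem continuousAt_RFevalC_ofReal (g : RatFunc ℝ) {t : ℝ} (h : g.denom.eval t ≠ 0) :
    ContinuousAt (RFevalC g) t :=
  continuousAt_RFevalC g (by rw [Polynomial.eval_map_ofReal]; exact_mod_cast h)

theorem homC_three (x : Fin 3 → RatFunc ℝ) (τ : ℂ) : homC x τ 3 = 1 :=
  Fin.snoc_last (α := fun _ => ℂ) _ _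

theorem homC_castSucc (x : Fin 3 → RatFunc ℝ) (τ : ℂ) (i : Fin 3) :
    homC x τ i.castSucc = RFevalC (x i) τ :=
  Fin.snoc_castSucc (α := fun _ => ℂ) _ _ _

theorem projHC_eq_smul {n a p q : Fin 4 → ℂ} {c : ℂ} (hp : p 3 = 1) (hq : q 3 = 1)
    (h : projHC n a p = c • q) :
    c = (∑ i, n i * p i) * a 3 - ∑ i, n i * a i ∧
      ∀ i, c * (q i - p i) = (∑ i, n i * p i) * (a i - a 3 * p i) := by
  have hcoord : ∀ i, (∑ i, n i * p i) * a i - (∑ i, n i * a i) * p i = c * q i := fun i => by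
    simpa [projHC] using congrFun h i
  have hc : c = (∑ i, n i * p i) * a 3 - ∑ i, n i * a i := by
    simpa [hp, hq] using (hcoord 3).symm
  exact ⟨hc, fun i => by linear_combination -(hcoord i) - p i * hc⟩

def projScale (n a : Fin 4 → ℝ) (x : Fin 3 → RatFunc ℝ) : RatFunc ℝ :=
  RatFunc.linearFormAlong n x /
    (RatFunc.C (∑ i, n i * a i) - RatFunc.C (a 3) * RatFunc.linearFormAlong n x)

theorem RelatedByProj.sub_eq_projScale_mul {n a : Fin 4 → ℝ} {x1 x2 : Fin 3 → RatFunc ℝ}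
    {τ σ : ℂ} (hrel : RelatedByProj n a x1 x2 τ σ)
    (hscale : (projScale n a x1).denom.eval₂ (algebraMap ℝ ℂ) τ ≠ 0) (i : Fin 3) :
    RFevalC (x2 i) σ - RFevalC (x1 i) τ =
      RFevalC (projScale n a x1) τ * (a 3 * RFevalC (x1 i) τ - a i.castSucc) := by
  obtain ⟨hdom, -, c, hc, h⟩ := hrel
  obtain ⟨hc_eq, hcoord⟩ := projHC_eq_smul (homC_three x1 τ) (homC_three x2 σ) h
  set f := algebraMap ℝ ℂ
  set S := RatFunc.linearFormAlong n x1
  set D := RatFunc.C (∑ i, n i * a i) - RatFunc.C (a 3) * S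
  have hx1 : ∀ j, (x1 j).denom.eval₂ f τ ≠ 0 := fun j => by
    simpa only [Polynomial.eval_map] using hdom j
  have hSreg := RatFunc.eval₂_denom_linearFormAlong_ne_zero n hx1
  have hDreg : D.denom.eval₂ f τ ≠ 0 :=
    RatFunc.eval₂_denom_sub_ne_zero (RatFunc.eval₂_denom_C_ne_zero _)
      (RatFunc.eval₂_denom_C_mul_ne_zero _ hSreg)
  have hS : RatFunc.eval f τ S = ∑ i, cmap4 n i * homC x1 τ i := by
    rw [RatFunc.eval_linearFormAlong n hx1]
    simp only [homC, evalAffC_eq_eval]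
    rfl
  have hD : RatFunc.eval f τ D = -c := by
    rw [RatFunc.eval_sub (RatFunc.eval₂_denom_C_ne_zero _)
      (RatFunc.eval₂_denom_C_mul_ne_zero _ hSreg), RatFunc.eval_C, RatFunc.eval_C_mul _ hSreg,
      hS, hc_eq]
    simp only [f, Complex.coe_algebraMap, cmap4]
    push_cast
    ring
  have hD0 : D ≠ 0 := fun h0 => hc (by simpa [h0] using hD)
  have hscale_eval : RFevalC (projScale n a x1) τ * -c = ∑ i, cmap4 n i * homC x1 τ i := by
    rw [RFevalC_eq_eval, ← hD, ← RatFunc.eval_mul f τ hscale hDreg, projScale,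
      div_mul_cancel₀ _ hD0, hS]
  have hi := hcoord i.castSucc
  rw [homC_castSucc, homC_castSucc] at hi
  simp only [cmap4] at hi hscale_eval
  apply mul_left_cancel₀ hc
  linear_combination hi + (a 3 * RFevalC (x1 i) τ - a i.castSucc) * hscale_eval

theorem statement_2_general (x1 x2 : Fin 3 → RatFunc ℝ) (n a : Fin 4 → ℝ) (ψ : RatFunc ℝ)
    (hψ : AssociatedRF n a x1 x2 ψ) :
    ∃ lam : RatFunc ℝ, ∀ t : ℝ,
      DomR x1 t → ψ.denom.eval t ≠ 0 → DomR x2 (RFeval ψ t) → lam.denom.eval t ≠ 0 →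
      ∀ i : Fin 3,
        RFeval (x2 i) (RFeval ψ t) - RFeval (x1 i) t =
          RFeval lam t * (a 3 * RFeval (x1 i) t - a i.castSucc) := by
  refine ⟨projScale n a x1, fun t hx1 hψt hx2 hscale i => ?_⟩
  set g : ℂ → ℂ := fun τ => RFevalC (x2 i) (RFevalC ψ τ) - RFevalC (x1 i) τ -
    RFevalC (projScale n a x1) τ * (a 3 * RFevalC (x1 i) τ - a i.castSucc)
  have hg : ∀ᶠ τ in cofinite, g τ = 0 :=
    (hψ.and (Polynomial.eventually_cofinite_eval₂_ne_zero _ (projScale n a x1).denom_ne_zero)).mono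
      fun τ ⟨hrel, hreg⟩ => sub_eq_zero.2 (hrel.sub_eq_projScale_mul hreg i)
  have hcont : ContinuousAt g t := by
    have hx1c := continuousAt_RFevalC_ofReal _ (hx1 i)
    have hx2c := (continuousAt_RFevalC_ofReal _ (hx2 i)).comp_of_eq
      (continuousAt_RFevalC_ofReal ψ hψt) (RFevalC_ofReal ψ t)
    exact (hx2c.sub hx1c).sub ((continuousAt_RFevalC_ofReal _ hscale).mul
      ((continuousAt_const.mul hx1c).sub continuousAt_const))
  have hgt := hcont.eq_of_eventually_cofinite hg
  simp only [g, RFevalC_ofReal] at hgt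
  exact_mod_cast sub_eq_zero.1 hgt

/-- Let `C2 = P_ã(C1)` with `ã = [ã1:ã2:ã3:ã4]`, and let `ψ` be the
rational function associated with `P_ã`.  Then there is a rational function `λ(t)` such
that for each `t`, the values `s = ψ(t)` and `λ = λ(t)` satisfy the system
`x2(s) − x1(t) = λ·(ã4·x1(t) − ã1)`, `y2(s) − y1(t) = λ·(ã4·y1(t) − ã2)`,
`z2(s) − z1(t) = λ·(ã4·z1(t) − ã3)`. -/
theorem statement_2 (x1 x2 : Fin 3 → RatFunc ℝ) (n a : Fin 4 → ℝ) (ψ : RatFunc ℝ)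
    (hx1 : ProperParam x1) (hx2 : ProperParam x2)
    (hnl1 : ¬ IsLineParam x1) (hnl2 : ¬ IsLineParam x2)
    (hn : PlaneNormalNZ n) (hplane : InPlane x2 n)
    (hsame : ¬ ∃ m : Fin 4 → ℝ, PlaneNormalNZ m ∧ InPlane x1 m ∧ InPlane x2 m)
    (hproj : IsProjectionOf n a x1 x2)
    (hψ : AssociatedRF n a x1 x2 ψ) :
    ∃ lam : RatFunc ℝ, ∀ t : ℝ,
      DomR x1 t → ψ.denom.eval t ≠ 0 → DomR x2 (RFeval ψ t) → lam.denom.eval t ≠ 0 →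
      ∀ i : Fin 3,
        RFeval (x2 i) (RFeval ψ t) - RFeval (x1 i) t =
          RFeval lam t * (a 3 * RFeval (x1 i) t - a i.castSucc) :=
  statement_2_general x1 x2 n a ψ hψ

end
end

section
/- Let x1(t) = (x1(t), y1(t), z1(t)) be a rational parametrization (with real rational function components) of a space curve C1, let (x0, y0, z0) ∈ ℝ³ and let (u0, v0, w0) ∈ ℝ³ ∖ {(0,0,0)}. If the determinant of the 3×3 matrix with rows (x1(t) − x0, y1(t) − y0, z1(t) − z0), (x1'(t), y1'(t), z1'(t)), (u0, v0, w0) vanishes identically as a rational function of t, then C1 is contained in a plane: there exist real constants a, b, c, d with (a,b,c) ≠ (0,0,0) such that a·x1(t) + b·y1(t) + c·z1(t) + d = 0 identically. -/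
noncomputable section

open Polynomial Filter Matrix

/-!
Write `v₀ = e ⨯₃ g`. By the Binet–Cauchy identity the determinant is the Wronskian
`a b' - a' b` of `a = e ⬝ᵥ (x₁ - p₀)` and `b = g ⬝ᵥ (x₁ - p₀)`; over a common denominator `Q`
of the coordinates it equals `W(A, B) / Q²` for polynomials `A`, `B`. A vanishing polynomial
Wronskian forces linear dependence: after dividing out `gcd A B` the quotients are coprime with
zero Wronskian, hence constant. So `α A + β B = 0` with `(α, β) ≠ 0`, and `C₁` lies in the
plane `(α e + β g) ⬝ᵥ (x - p₀) = 0`, whose normal is nonzero since `e ⨯₃ g ≠ 0`.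
-/

namespace Polynomial

variable {K : Type*} [Field K]

theorem wronskian_mul_mul (d a b : K[X]) :
    wronskian (d * a) (d * b) = d ^ 2 * wronskian a b := by
  simp only [wronskian, derivative_mul]
  ring

theorem mul_wronskian_sub_mul_wronskian (a b q : K[X]) :
    a * wronskian q b - b * wronskian q a = q * wronskian a b := by
  simp only [wronskian]
  ring

theorem exists_smul_add_smul_eq_zero_of_wronskian_eq_zero [CharZero K] {a b : K[X]}
    (h : wronskian a b = 0) : ∃ α β : K, (α, β) ≠ 0 ∧ α • a + β • b = 0 := by
  classical
  obtain ⟨a', b', ha, hb, hunit⟩ := extract_gcd a b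
  generalize gcd a b = d at ha hb
  subst ha hb
  rcases eq_or_ne d 0 with rfl | hd
  · exact ⟨1, 0, by simp, by simp⟩
  have hcop : IsCoprime a' b' := (gcd_isUnit_iff a' b').mp hunit
  rw [wronskian_mul_mul] at h
  have hw : wronskian a' b' = 0 := (mul_eq_zero.mp h).resolve_left (pow_ne_zero 2 hd)
  obtain ⟨ha', hb'⟩ := hcop.wronskian_eq_zero_iff.mp hw
  obtain ⟨α, rfl⟩ : ∃ α, a' = C α := ⟨_, eq_C_of_derivative_eq_zero ha'⟩
  obtain ⟨β, rfl⟩ : ∃ β, b' = C β := ⟨_, eq_C_of_derivative_eq_zero hb'⟩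
  refine ⟨β, -α, fun h0 => not_isCoprime_zero_zero (R := K[X]) ?_, ?_⟩
  · simp_all
  · simp only [smul_eq_C_mul, map_neg]
    ring

theorem eq_zero_of_eval_eq_zero_of_eval_ne_zero [Infinite K] {p q : K[X]} (hq : q ≠ 0)
    (h : ∀ t, q.eval t ≠ 0 → p.eval t = 0) : p = 0 := by
  refine (mul_eq_zero.mp (Polynomial.funext fun t => ?_)).resolve_right hq
  by_cases ht : q.eval t = 0 <;> simp [ht, h]

end Polynomial

theorem RatFunc.exists_eq_div_common_denom {ι K : Type*} [Fintype ι] [Field K]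
    (x : ι → RatFunc K) :
    ∃ (P : ι → K[X]) (Q : K[X]), Q ≠ 0 ∧
      (∀ i, x i = algebraMap K[X] (RatFunc K) (P i) / algebraMap K[X] (RatFunc K) Q) ∧
      ∀ t, Q.eval t ≠ 0 ↔ ∀ i, (x i).denom.eval t ≠ 0 := by
  classical
  refine ⟨fun i => (x i).num * ∏ j ∈ Finset.univ.erase i, (x j).denom, ∏ i, (x i).denom,
    Finset.prod_ne_zero_iff.mpr fun i _ => (x i).denom_ne_zero, fun i => ?_, fun t => ?_⟩
  · have hrest : ∏ j ∈ Finset.univ.erase i, (x j).denom ≠ 0 :=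
      Finset.prod_ne_zero_iff.mpr fun j _ => (x j).denom_ne_zero
    rw [← Finset.mul_prod_erase Finset.univ (fun j => (x j).denom) (Finset.mem_univ i),
      map_mul, map_mul, mul_div_mul_right _ _ (RatFunc.algebraMap_ne_zero hrest),
      RatFunc.num_div_denom]
  · simp [eval_prod, Finset.prod_ne_zero_iff]

section RFeval

variable {f : RatFunc ℝ} {P Q : ℝ[X]} {t : ℝ}

theorem denom_eval_ne_zero_of_eq_div
    (hf : f = algebraMap ℝ[X] (RatFunc ℝ) P / algebraMap ℝ[X] (RatFunc ℝ) Q)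
    (ht : Q.eval t ≠ 0) : f.denom.eval t ≠ 0 := by
  have hQ : Q ≠ 0 := by rintro rfl; simp at ht
  obtain ⟨r, hr⟩ := (RatFunc.denom_dvd hQ).mpr ⟨P, hf⟩
  rw [hr, eval_mul] at ht
  exact left_ne_zero_of_mul ht

theorem RFeval_of_eq_div
    (hf : f = algebraMap ℝ[X] (RatFunc ℝ) P / algebraMap ℝ[X] (RatFunc ℝ) Q)
    (ht : Q.eval t ≠ 0) : RFeval f t = P.eval t / Q.eval t := by
  have hQ : Q ≠ 0 := by rintro rfl; simp at ht
  have hnd := congrArg (eval t) ((RatFunc.num_mul_eq_mul_denom_iff hQ).mpr hf)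
  rw [eval_mul, eval_mul] at hnd
  rw [RFeval, div_eq_div_iff (denom_eval_ne_zero_of_eq_div hf ht) ht, hnd]

theorem RFeval_RFderiv_of_eq_div
    (hf : f = algebraMap ℝ[X] (RatFunc ℝ) P / algebraMap ℝ[X] (RatFunc ℝ) Q)
    (ht : Q.eval t ≠ 0) : RFeval (RFderiv f) t = (wronskian Q P).eval t / Q.eval t ^ 2 := by
  have hQ : Q ≠ 0 := by rintro rfl; simp at ht
  have hd := denom_eval_ne_zero_of_eq_div hf ht
  have hnd := (RatFunc.num_mul_eq_mul_denom_iff hQ).mpr hf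
  have hval := congrArg (eval t) hnd
  have hderiv := congrArg (fun p => eval t (derivative p)) hnd
  simp only [eval_mul, derivative_mul, eval_add] at hval hderiv
  rw [RFderiv, ← map_mul, ← map_mul, ← map_sub,
    RFeval_of_eq_div rfl (by simpa using pow_ne_zero 2 hd),
    div_eq_div_iff (by simpa using pow_ne_zero 2 hd) (pow_ne_zero 2 ht)]
  simp only [wronskian, eval_sub, eval_mul, eval_pow]
  linear_combination (f.denom.eval t * Q.eval t) * hderiv
    - ((derivative Q).eval t * f.denom.eval t + (derivative f.denom).eval t * Q.eval t) * hval

end RFeval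

theorem exists_crossProduct_eq (v : Fin 3 → ℝ) : ∃ e g : Fin 3 → ℝ, e ⨯₃ g = v := by
  obtain ⟨e, he, he0⟩ := Submodule.exists_mem_ne_zero_of_ne_bot
    (LinearMap.ker_ne_bot_of_finrank_lt (f := dotProductBilin ℝ ℝ v) (by simp))
  have hee : e ⬝ᵥ e ≠ 0 := fun h => he0 (dotProduct_self_eq_zero.mp h : e = 0)
  refine ⟨e, (e ⬝ᵥ e)⁻¹ • (v ⨯₃ e), ?_⟩
  rw [map_smul, cross_cross_eq_smul_sub_smul', show v ⬝ᵥ e = 0 from he, zero_smul, sub_zero,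
    smul_smul, inv_mul_cancel₀ hee, one_smul]

theorem smul_add_smul_ne_zero_of_crossProduct_ne_zero {F : Type*} [Field F] {e g : Fin 3 → F}
    (h : e ⨯₃ g ≠ 0) {α β : F} (hαβ : (α, β) ≠ 0) : α • e + β • g ≠ 0 := by
  have hind : LinearIndependent F ![e, g] := crossProduct_ne_zero_iff_linearIndependent.mp h
  intro h0
  obtain ⟨rfl, rfl⟩ := LinearIndependent.pair_iff.mp hind α β h0
  exact hαβ rfl

theorem det_vecCons_crossProduct {R : Type*} [CommRing R] (y z e g : Fin 3 → R) :
    Matrix.det ![y, z, e ⨯₃ g] = (e ⬝ᵥ y) * (g ⬝ᵥ z) - (e ⬝ᵥ z) * (g ⬝ᵥ y) := by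
  rw [← triple_product_eq_det, triple_product_permutation, triple_product_permutation,
    cross_dot_cross]

section CommonDenominator

variable {ι : Type*} [Fintype ι] {x : ι → RatFunc ℝ} {P : ι → ℝ[X]} {Q : ℝ[X]} {t : ℝ}

/-- The numerator over `Q` of `c ⬝ᵥ (x - p₀)` when `x = P / Q`. -/
def dotNum (P : ι → ℝ[X]) (Q : ℝ[X]) (p₀ : ι → ℝ) : (ι → ℝ) →ₗ[ℝ] ℝ[X] :=
  Fintype.linearCombination ℝ fun i => P i - p₀ i • Q

theorem dotProduct_eval_div (c : ι → ℝ) (R : ι → ℝ[X]) (s : ℝ) :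
    c ⬝ᵥ (fun i => (R i).eval t / s) = (Fintype.linearCombination ℝ R c).eval t / s := by
  simp [dotProduct, Fintype.linearCombination_apply, eval_finsetSum, Finset.sum_div,
    mul_div_assoc]

theorem dotProduct_RFeval_sub
    (hx : ∀ i, x i = algebraMap ℝ[X] (RatFunc ℝ) (P i) / algebraMap ℝ[X] (RatFunc ℝ) Q)
    (ht : Q.eval t ≠ 0) (p₀ c : ι → ℝ) :
    c ⬝ᵥ (fun i => RFeval (x i) t - p₀ i) = (dotNum P Q p₀ c).eval t / Q.eval t := by
  rw [dotNum, ← dotProduct_eval_div]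
  congr 1
  funext i
  rw [RFeval_of_eq_div (hx i) ht, eval_sub, eval_smul, smul_eq_mul, sub_div,
    mul_div_cancel_right₀ _ ht]

theorem dotProduct_RFeval_RFderiv
    (hx : ∀ i, x i = algebraMap ℝ[X] (RatFunc ℝ) (P i) / algebraMap ℝ[X] (RatFunc ℝ) Q)
    (ht : Q.eval t ≠ 0) (p₀ c : ι → ℝ) :
    c ⬝ᵥ (fun i => RFeval (RFderiv (x i)) t) =
      (wronskian Q (dotNum P Q p₀ c)).eval t / Q.eval t ^ 2 := by
  have hshift : ∀ i, wronskian Q (P i) = wronskian Q (P i - p₀ i • Q) := fun i => by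
    simp only [wronskian, derivative_sub, smul_eq_C_mul, derivative_mul, derivative_C]
    ring
  calc c ⬝ᵥ (fun i => RFeval (RFderiv (x i)) t)
      = c ⬝ᵥ (fun i => (wronskian Q (P i - p₀ i • Q)).eval t / Q.eval t ^ 2) := by
        congr 1
        funext i
        rw [RFeval_RFderiv_of_eq_div (hx i) ht, hshift]
    _ = _ := by
        rw [dotProduct_eval_div, dotNum, ← wronskianBilin_apply, Fintype.linearCombination_apply,
          Fintype.linearCombination_apply, map_sum]
        simp only [map_smul, wronskianBilin_apply]

end CommonDenominator

theorem det_RFeval_eq_wronskian_div {x : Fin 3 → RatFunc ℝ} {P : Fin 3 → ℝ[X]} {Q : ℝ[X]}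
    {t : ℝ}
    (hx : ∀ i, x i = algebraMap ℝ[X] (RatFunc ℝ) (P i) / algebraMap ℝ[X] (RatFunc ℝ) Q)
    (ht : Q.eval t ≠ 0) (p₀ e g : Fin 3 → ℝ) :
    Matrix.det ![fun i => RFeval (x i) t - p₀ i, fun i => RFeval (RFderiv (x i)) t, e ⨯₃ g] =
      (wronskian (dotNum P Q p₀ e) (dotNum P Q p₀ g)).eval t / Q.eval t ^ 2 := by
  rw [det_vecCons_crossProduct, dotProduct_RFeval_sub hx ht, dotProduct_RFeval_sub hx ht,
    dotProduct_RFeval_RFderiv hx ht p₀, dotProduct_RFeval_RFderiv hx ht p₀]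
  have h := congrArg (eval t)
    (mul_wronskian_sub_mul_wronskian (dotNum P Q p₀ e) (dotNum P Q p₀ g) Q)
  simp only [eval_sub, eval_mul] at h
  field_simp
  linear_combination h

/-- Let `x1(t)` be a rational parametrization of a space curve `C1`,
let `(x0,y0,z0) = p0 ∈ ℝ³` and let `(u0,v0,w0) = v0 ∈ ℝ³ ∖ {0}`.  If the determinant
of the matrix with rows `x1(t) − p0`, `x1'(t)`, `v0` vanishes identically as a rational
function of `t`, then `C1` is contained in a plane: there exist `a,b,c,d ∈ ℝ` with
`(a,b,c) ≠ (0,0,0)` such that `a·x1(t) + b·y1(t) + c·z1(t) + d = 0` identically. -/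
theorem statement_12 (x1 : Fin 3 → RatFunc ℝ) (p0 v0 : Fin 3 → ℝ)
    (hv0 : v0 ≠ 0)
    (hdet : ∀ t : ℝ, DomR x1 t →
      Matrix.det (Matrix.of ![fun i => RFeval (x1 i) t - p0 i,
                              fun i => RFeval (RFderiv (x1 i)) t,
                              fun i => v0 i]) = 0) :
    ∃ a b c d : ℝ, ¬ (a = 0 ∧ b = 0 ∧ c = 0) ∧
      ∀ t : ℝ, DomR x1 t →
        a * RFeval (x1 0) t + b * RFeval (x1 1) t + c * RFeval (x1 2) t + d = 0 := by
  obtain ⟨e, g, rfl⟩ := exists_crossProduct_eq v0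
  obtain ⟨P, Q, hQ, hx, hdom⟩ := RatFunc.exists_eq_div_common_denom x1
  have hW : wronskian (dotNum P Q p0 e) (dotNum P Q p0 g) = 0 := by
    refine eq_zero_of_eval_eq_zero_of_eval_ne_zero hQ fun t ht => ?_
    have h : Matrix.det ![fun i => RFeval (x1 i) t - p0 i, fun i => RFeval (RFderiv (x1 i)) t,
      e ⨯₃ g] = 0 := hdet t ((hdom t).mp ht)
    rw [det_RFeval_eq_wronskian_div hx ht] at h
    exact (div_eq_zero_iff.mp h).resolve_right (pow_ne_zero 2 ht)
  obtain ⟨α, β, hαβ, hdep⟩ := exists_smul_add_smul_eq_zero_of_wronskian_eq_zero hW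
  have hn := smul_add_smul_ne_zero_of_crossProduct_ne_zero hv0 hαβ
  set n := α • e + β • g
  refine ⟨n 0, n 1, n 2, -(n ⬝ᵥ p0), fun h0 => hn ?_, fun t ht => ?_⟩
  · ext i
    fin_cases i <;> simp [h0]
  · have h := dotProduct_RFeval_sub hx ((hdom t).mpr ht) p0 n
    rw [map_add, map_smul, map_smul, hdep, eval_zero, zero_div] at h
    simp only [dotProduct, Fin.sum_univ_three] at h ⊢
    linarith

end
end
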